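/- arXiv:1610.07698 — 3 statements merged into one kernel-verified Lean document; each statement's English description precedes it below -/
import Mathlib

section
/- (Cutoff commutator estimate) Let d ≥ 1 and let κ: ℝ^d × ℝ^d → ℝ be measurable with 0 ≤ κ(x,z) ≤ κ₁ and κ(x,z) = κ(x,−z) for all x, z. Let χ ∈ C_c^∞(ℝ^d) take values in [0,1] with χ(x) = 1 for |x| ≤ 1 and χ(x) = 0 for |x| > 2, and for R ≥ 1 set χ_R(x) := χ(x/R). Let u: ℝ^d → ℝ be bounded and of class C¹ with bounded gradient, and assume the principal-value integrals ℒ^κ u(x) and ℒ^κ (u χ_R)(x) exist for all x. Then there exists a constant C > 0, depending only on d, κ₁, ‖χ‖_∞, ‖∇χ‖_∞ and ‖∇²χ‖_∞, such that for all x ∈ ℝ^d and all R ≥ 1, |ℒ^κ (u χ_R)(x) − χ_R(x) ℒ^κ u(x)| ≤ C (‖u‖_∞ + ‖∇u‖_∞) R^{−1/2}. -/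
open MeasureTheory Real Filter Topology Metric ENNReal NNReal

lemma exists_dyadic (t : ℝ) (ht : 1 ≤ t) : ∃ k : ℕ, 2^k ≤ t ∧ t < 2^(k+1) := by
  refine ⟨⌊Real.logb 2 t⌋₊, ?_, ?_⟩
  · calc (2:ℝ)^(⌊Real.logb 2 t⌋₊) = (2:ℝ)^((⌊Real.logb 2 t⌋₊:ℝ)) := by rw [Real.rpow_natCast]
      _ ≤ 2 ^ (Real.logb 2 t) :=
          Real.rpow_le_rpow_of_exponent_le one_le_two (Nat.floor_le (Real.logb_nonneg one_lt_two ht))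
      _ = t := Real.rpow_logb two_pos (by norm_num) (lt_of_lt_of_le one_pos ht)
  · calc t = 2 ^ (Real.logb 2 t) := (Real.rpow_logb two_pos (by norm_num) (lt_of_lt_of_le one_pos ht)).symm
      _ < 2^((⌊Real.logb 2 t⌋₊:ℝ)+1) := Real.rpow_lt_rpow_of_exponent_lt one_lt_two (Nat.lt_floor_add_one _)
      _ = 2^(⌊Real.logb 2 t⌋₊+1) := by
          rw [← Real.rpow_natCast 2 (⌊Real.logb 2 t⌋₊+1)]; norm_num

lemma ofReal_half_pow (k : ℕ) : ENNReal.ofReal ((1/2:ℝ)^k) = (2⁻¹:ℝ≥0∞)^k := by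
  rw [ENNReal.ofReal_pow (by norm_num)]
  congr 1
  rw [one_div, ENNReal.ofReal_inv_of_pos (by norm_num)]
  norm_num

lemma tsum_half : (∑' k : ℕ, ((2:ℝ≥0∞)⁻¹)^k) = 2 := by
  rw [ENNReal.tsum_geometric]; norm_num

lemma aux_far (d : ℕ) (hd : 1 ≤ d) : ∃ c : ℝ, 0 < c ∧ ∀ r : ℝ, 0 < r →
    ∫⁻ z in {z : EuclideanSpace ℝ (Fin d) | r ≤ ‖z‖}, ENNReal.ofReal (‖z‖ ^ (-(d:ℝ)-1)) ≤
      ENNReal.ofReal (c / r) := by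
  haveI : Nonempty (Fin d) := ⟨⟨0, hd⟩⟩
  set E := EuclideanSpace ℝ (Fin d) with hE
  set v : ℝ := (volume (ball (0:E) 1)).toReal with hv
  have hvfin : volume (ball (0:E) 1) ≠ ⊤ := measure_ball_lt_top.ne
  have hballv : volume (ball (0:E) 1) = ENNReal.ofReal v := (ENNReal.ofReal_toReal hvfin).symm
  have hv0 : 0 ≤ v := ENNReal.toReal_nonneg
  refine ⟨2^(d+1) * v + 1, by positivity, fun r hr => ?_⟩
  set A : ℕ → Set E := fun k => {z : E | 2^k * r ≤ ‖z‖} ∩ ball 0 (2^(k+1)*r) with hA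
  have hcov : {z : E | r ≤ ‖z‖} ⊆ ⋃ k, A k := by
    intro z hz
    have hz' : (1:ℝ) ≤ ‖z‖ / r := (one_le_div hr).2 hz
    obtain ⟨k, hk1, hk2⟩ := exists_dyadic _ hz'
    refine Set.mem_iUnion.2 ⟨k, (le_div_iff₀ hr).1 hk1, ?_⟩
    simp only [mem_ball, dist_zero_right]
    exact (div_lt_iff₀ hr).1 hk2
  calc ∫⁻ z in {z : E | r ≤ ‖z‖}, ENNReal.ofReal (‖z‖ ^ (-(d:ℝ)-1))
      ≤ ∑' k, ∫⁻ z in A k, ENNReal.ofReal (‖z‖ ^ (-(d:ℝ)-1)) :=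
        le_trans (lintegral_mono_set hcov) (lintegral_iUnion_le _ _)
    _ ≤ ∑' k, ENNReal.ofReal (2^d * v / r) * ENNReal.ofReal ((1/2)^k) := by
        refine ENNReal.tsum_le_tsum fun k => ?_
        have h2k : (0:ℝ) < 2^k * r := by positivity
        calc ∫⁻ z in A k, ENNReal.ofReal (‖z‖ ^ (-(d:ℝ)-1))
            ≤ ∫⁻ _ in A k, ENNReal.ofReal ((2^k*r) ^ (-(d:ℝ)-1)) := by
              refine setLIntegral_mono_ae aemeasurable_const (Filter.Eventually.of_forall fun z hz => ?_)
              refine ENNReal.ofReal_le_ofReal (Real.rpow_le_rpow_of_nonpos h2k hz.1 ?_)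
              have : (1:ℝ) ≤ (d:ℝ) := by exact_mod_cast hd
              linarith
          _ = ENNReal.ofReal ((2^k*r) ^ (-(d:ℝ)-1)) * volume (A k) := setLIntegral_const _ _
          _ ≤ ENNReal.ofReal ((2^k*r) ^ (-(d:ℝ)-1)) * (ENNReal.ofReal ((2^(k+1)*r)^d) * ENNReal.ofReal v) := by
              gcongr
              calc volume (A k) ≤ volume (ball (0:E) (2^(k+1)*r)) := measure_mono Set.inter_subset_right
                _ = ENNReal.ofReal ((2^(k+1)*r)^d) * ENNReal.ofReal v := by
                    rw [Measure.addHaar_ball volume _ (by positivity : (0:ℝ) ≤ 2^(k+1)*r)]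
                    rw [hballv]
                    congr 2
                    exact congrArg _ (by rw [finrank_euclideanSpace_fin])
          _ = ENNReal.ofReal ((2^k*r) ^ (-(d:ℝ)-1) * ((2^(k+1)*r)^d * v)) := by
              rw [ENNReal.ofReal_mul (by positivity), ENNReal.ofReal_mul (by positivity)]
          _ ≤ ENNReal.ofReal (2^d * v / r) * ENNReal.ofReal ((1/2)^k) := by
              rw [← ENNReal.ofReal_mul (by positivity)]
              apply ENNReal.ofReal_le_ofReal
              rw [show ((2:ℝ)^k*r) ^ (-(d:ℝ)-1) = (((2:ℝ)^k*r)^(d+1))⁻¹ by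
                rw [show -(d:ℝ)-1 = -((d+1:ℕ):ℝ) by push_cast; ring, Real.rpow_neg h2k.le, Real.rpow_natCast]]
              rw [show (((2:ℝ)^k*r)^(d+1))⁻¹ * (((2:ℝ)^(k+1)*r)^d * v) = 2^d*v/r*(1/2)^k from by
                field_simp; ring_nf; simp]
    _ = ENNReal.ofReal (2^d * v / r) * ∑' k, ENNReal.ofReal ((1/2:ℝ)^k) := ENNReal.tsum_mul_left
    _ ≤ ENNReal.ofReal (2^d * v / r) * 2 := by
        simp_rw [ofReal_half_pow]
        rw [tsum_half]
    _ ≤ ENNReal.ofReal ((2^(d+1) * v + 1) / r) := by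
        rw [show (2:ℝ≥0∞) = ENNReal.ofReal 2 by norm_num, ← ENNReal.ofReal_mul (by positivity)]
        apply ENNReal.ofReal_le_ofReal
        rw [div_mul_eq_mul_div]
        gcongr
        rw [pow_succ]
        nlinarith

lemma aux_near (d : ℕ) (hd : 1 ≤ d) : ∃ c : ℝ, 0 < c ∧ ∀ r : ℝ, 0 < r →
    ∫⁻ z in ball (0:EuclideanSpace ℝ (Fin d)) r, ENNReal.ofReal (‖z‖ ^ ((1:ℝ)-(d:ℝ))) ≤
      ENNReal.ofReal (c * r) := by
  haveI : Nonempty (Fin d) := ⟨⟨0, hd⟩⟩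
  obtain ⟨e, rfl⟩ : ∃ e, d = e + 1 := ⟨d-1, (Nat.succ_pred_eq_of_pos hd).symm⟩
  set E := EuclideanSpace ℝ (Fin (e+1)) with hE
  set v : ℝ := (volume (ball (0:E) 1)).toReal with hv
  have hvfin : volume (ball (0:E) 1) ≠ ⊤ := measure_ball_lt_top.ne
  have hballv : volume (ball (0:E) 1) = ENNReal.ofReal v := (ENNReal.ofReal_toReal hvfin).symm
  have hv0 : 0 ≤ v := ENNReal.toReal_nonneg
  have hexp : ∀ x : ℝ, 0 < x → x ^ ((1:ℝ)-((e+1:ℕ):ℝ)) = (x^e)⁻¹ := by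
    intro x hx
    rw [show (1:ℝ)-((e+1:ℕ):ℝ) = -((e:ℕ):ℝ) by push_cast; ring, Real.rpow_neg hx.le,
      Real.rpow_natCast]
  refine ⟨2^(e+1) * v + 1, by positivity, fun r hr => ?_⟩
  set B : ℕ → Set E := fun k => closedBall (0:E) ((1/2)^k * r) \ ball 0 ((1/2)^(k+1)*r) with hB
  have hcov : ball (0:E) r \ ({0} : Set E) ⊆ ⋃ k, B k := by
    rintro z ⟨hz1, hz2⟩
    have hz0 : 0 < ‖z‖ := norm_pos_iff.2 (by simpa using hz2)
    rw [mem_ball, dist_zero_right] at hz1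
    have ht : (1:ℝ) ≤ r / ‖z‖ := (one_le_div hz0).2 hz1.le
    obtain ⟨k, hk1, hk2⟩ := exists_dyadic _ ht
    refine Set.mem_iUnion.2 ⟨k, ?_, ?_⟩
    · rw [mem_closedBall, dist_zero_right]
      rw [le_div_iff₀ hz0] at hk1
      calc ‖z‖ ≤ r / 2^k := by rw [le_div_iff₀ (by positivity), mul_comm]; exact hk1
        _ = (1/2)^k * r := by rw [div_pow, one_pow]; ring
    · rw [mem_ball, dist_zero_right, not_lt]
      rw [div_lt_iff₀ hz0] at hk2
      calc (1/2:ℝ)^(k+1) * r = r / 2^(k+1) := by rw [div_pow, one_pow]; ring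
        _ ≤ ‖z‖ := by rw [div_le_iff₀ (by positivity)]; linarith
  have hae : (ball (0:E) r : Set E) =ᵐ[volume] (ball (0:E) r \ ({0} : Set E)) :=
    (diff_null_ae_eq_self (measure_singleton (0:E))).symm
  calc ∫⁻ z in ball (0:E) r, ENNReal.ofReal (‖z‖ ^ ((1:ℝ)-((e+1:ℕ):ℝ)))
      = ∫⁻ z in ball (0:E) r \ ({0} : Set E), ENNReal.ofReal (‖z‖ ^ ((1:ℝ)-((e+1:ℕ):ℝ))) :=
        setLIntegral_congr hae
    _ ≤ ∑' k, ∫⁻ z in B k, ENNReal.ofReal (‖z‖ ^ ((1:ℝ)-((e+1:ℕ):ℝ))) :=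
        le_trans (lintegral_mono_set hcov) (lintegral_iUnion_le _ _)
    _ ≤ ∑' k, ENNReal.ofReal (2^e * v * r) * ENNReal.ofReal ((1/2)^k) := by
        refine ENNReal.tsum_le_tsum fun k => ?_
        have hin : (0:ℝ) < (1/2)^(k+1) * r := by positivity
        calc ∫⁻ z in B k, ENNReal.ofReal (‖z‖ ^ ((1:ℝ)-((e+1:ℕ):ℝ)))
            ≤ ∫⁻ _ in B k, ENNReal.ofReal (((1/2)^(k+1)*r) ^ ((1:ℝ)-((e+1:ℕ):ℝ))) := by
              refine setLIntegral_mono_ae aemeasurable_const (Filter.Eventually.of_forall fun z hz => ?_)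
              refine ENNReal.ofReal_le_ofReal (Real.rpow_le_rpow_of_nonpos hin ?_ ?_)
              · have := hz.2
                rw [mem_ball, dist_zero_right, not_lt] at this
                exact this
              · push_cast; linarith
          _ = ENNReal.ofReal (((1/2)^(k+1)*r) ^ ((1:ℝ)-((e+1:ℕ):ℝ))) * volume (B k) :=
              setLIntegral_const _ _
          _ ≤ ENNReal.ofReal (((1/2)^(k+1)*r) ^ ((1:ℝ)-((e+1:ℕ):ℝ))) *
                (ENNReal.ofReal (((1/2)^k*r)^(e+1)) * ENNReal.ofReal v) := by
              gcongr
              calc volume (B k) ≤ volume (closedBall (0:E) ((1/2)^k*r)) :=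
                    measure_mono Set.diff_subset
                _ = ENNReal.ofReal (((1/2)^k*r)^(e+1)) * ENNReal.ofReal v := by
                    rw [Measure.addHaar_closedBall volume _ (by positivity : (0:ℝ) ≤ (1/2)^k*r)]
                    rw [hballv]
                    congr 2
                    exact congrArg _ (by rw [finrank_euclideanSpace_fin])
          _ ≤ ENNReal.ofReal (2^e * v * r) * ENNReal.ofReal ((1/2)^k) := by
              rw [← ENNReal.ofReal_mul (by positivity), ← ENNReal.ofReal_mul (by positivity),
                ← ENNReal.ofReal_mul (by positivity)]
              apply ENNReal.ofReal_le_ofReal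
              rw [hexp _ hin]
              rw [show (((1/2:ℝ)^(k+1)*r)^e)⁻¹ * (((1/2:ℝ)^k*r)^(e+1) * v) = 2^e*v*r*(1/2)^k from by
                field_simp; ring_nf; simp]
    _ = ENNReal.ofReal (2^e * v * r) * ∑' k, ENNReal.ofReal ((1/2:ℝ)^k) := ENNReal.tsum_mul_left
    _ ≤ ENNReal.ofReal (2^e * v * r) * 2 := by
        simp_rw [ofReal_half_pow]; rw [tsum_half]
    _ ≤ ENNReal.ofReal ((2^(e+1) * v + 1) * r) := by
        rw [show (2:ℝ≥0∞) = ENNReal.ofReal 2 by norm_num, ← ENNReal.ofReal_mul (by positivity)]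
        apply ENNReal.ofReal_le_ofReal
        rw [pow_succ]
        nlinarith

lemma chi_lip {E : Type*} [NormedAddCommGroup E] [NormedSpace ℝ E]
    (χ : E → ℝ) (hχsm : ContDiff ℝ (⊤ : ℕ∞) χ) (hχc : HasCompactSupport χ) :
    ∃ K₁ : ℝ, 0 ≤ K₁ ∧ ∀ p q : E, |χ p - χ q| ≤ K₁ * ‖p - q‖ := by
  obtain ⟨K, hK⟩ := (hχc.fderiv ℝ).exists_bound_of_continuous (hχsm.continuous_fderiv (by simp))
  refine ⟨max K 0, le_max_right _ _, fun p q => ?_⟩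
  have := convex_univ.norm_image_sub_le_of_norm_fderiv_le
    (f := χ) (C := max K 0) (fun y (_ : y ∈ (Set.univ : Set E)) => (hχsm.differentiable (by simp)).differentiableAt)
    (fun y _ => le_trans (hK y) (le_max_left _ _)) (Set.mem_univ q) (Set.mem_univ p)
  simpa [Real.norm_eq_abs] using this

lemma chi_taylor {E : Type*} [NormedAddCommGroup E] [NormedSpace ℝ E]
    (χ : E → ℝ) (hχsm : ContDiff ℝ (⊤ : ℕ∞) χ) (hχc : HasCompactSupport χ) :
    ∃ K₂ : ℝ, 0 ≤ K₂ ∧ ∀ p h : E, |χ (p+h) + χ (p-h) - 2*χ p| ≤ 2*K₂*‖h‖^2 := by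
  set g := fderiv ℝ χ with hg
  have hgsm : ContDiff ℝ (⊤ : ℕ∞) g := hχsm.fderiv_right (by simp)
  obtain ⟨K, hK⟩ : ∃ K : ℝ, ∀ x, ‖fderiv ℝ g x‖ ≤ K := HasCompactSupport.exists_bound_of_continuous (E := E →L[ℝ] E →L[ℝ] ℝ) ((hχc.fderiv ℝ).fderiv ℝ) (hgsm.continuous_fderiv (by simp))
  set K₂ := max K 0 with hK₂
  have hglip : ∀ p q : E, ‖g p - g q‖ ≤ K₂ * ‖p - q‖ := fun p q =>
    convex_univ.norm_image_sub_le_of_norm_fderiv_le (C := K₂)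
      (fun y (_ : y ∈ (Set.univ : Set E)) => (hgsm.differentiable (by simp)).differentiableAt)
      (fun y _ => le_trans (hK y) (le_max_left _ _)) (Set.mem_univ q) (Set.mem_univ p)
  refine ⟨K₂, le_max_right _ _, fun p h => ?_⟩
  have key : ∀ h' : E, ‖h'‖ ≤ ‖h‖ → ‖χ (p+h') - χ p - g p h'‖ ≤ K₂ * ‖h‖ * ‖h‖ := by
    intro h' hh'
    have := (convex_closedBall p ‖h‖).norm_image_sub_le_of_norm_fderiv_le'
      (φ := g p) (f := χ) (x := p) (y := p + h') (C := K₂ * ‖h‖)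
      (fun y _ => (hχsm.differentiable (by simp)).differentiableAt)
      (fun y hy => by
        have h1 : ‖g y - g p‖ ≤ K₂ * ‖y - p‖ := hglip y p
        have h2 : ‖y - p‖ ≤ ‖h‖ := by
          rw [← dist_eq_norm]; exact mem_closedBall.1 hy
        have hK₂0 : 0 ≤ K₂ := le_max_right _ _
        calc ‖fderiv ℝ χ y - g p‖ = ‖g y - g p‖ := rfl
          _ ≤ K₂ * ‖y - p‖ := h1
          _ ≤ K₂ * ‖h‖ := by nlinarith)
      (mem_closedBall_self (norm_nonneg h))
      (by rw [mem_closedBall, dist_eq_norm]; simpa [add_sub_cancel_left] using hh')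
    have h3 : ‖χ (p + h') - χ p - (g p) h'‖ ≤ K₂ * ‖h‖ * ‖h'‖ := by
      simpa [add_sub_cancel_left] using this
    exact h3.trans (mul_le_mul_of_nonneg_left hh' (mul_nonneg (le_max_right _ _) (norm_nonneg h)))
  have k1 := key h le_rfl
  have k2 := key (-h) (by simp)
  have hsum : χ (p+h) + χ (p-h) - 2*χ p
      = (χ (p+h) - χ p - g p h) + (χ (p + (-h)) - χ p - g p (-h)) := by
    rw [map_neg]
    rw [show p + (-h) = p - h by abel]
    ring
  rw [hsum]
  calc |(χ (p+h) - χ p - g p h) + (χ (p + (-h)) - χ p - g p (-h))|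
      ≤ |χ (p+h) - χ p - g p h| + |χ (p + (-h)) - χ p - g p (-h)| := abs_add_le _ _
    _ ≤ K₂ * ‖h‖ * ‖h‖ + K₂ * ‖h‖ * ‖h‖ := by
        refine add_le_add ?_ ?_
        · simpa [Real.norm_eq_abs] using k1
        · simpa [Real.norm_eq_abs] using k2
    _ = 2*K₂*‖h‖^2 := by ring

set_option maxHeartbeats 1000000 in
/-- Cutoff commutator estimate: `|ℒ^κ(u χ_R) - χ_R ℒ^κ u| ≤ C (‖u‖_∞ + ‖∇u‖_∞) R^{-1/2}`,
where the principal-value integrals `ℒ^κ u`, `ℒ^κ (u χ_R)` are assumed to exist. -/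
theorem stmt_4 (d : ℕ) (hd : 1 ≤ d)
    (κ : EuclideanSpace ℝ (Fin d) → EuclideanSpace ℝ (Fin d) → ℝ) (κ₁ : ℝ)
    (hκmeas : Measurable (Function.uncurry κ))
    (hκnn : ∀ x z, 0 ≤ κ x z) (hκup : ∀ x z, κ x z ≤ κ₁)
    (hκsym : ∀ x z, κ x z = κ x (-z))
    (χ : EuclideanSpace ℝ (Fin d) → ℝ)
    (hχsm : ContDiff ℝ (⊤ : ℕ∞) χ) (hχc : HasCompactSupport χ)
    (hχ01 : ∀ x, χ x ∈ Set.Icc (0:ℝ) 1)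
    (hχ1 : ∀ x : EuclideanSpace ℝ (Fin d), ‖x‖ ≤ 1 → χ x = 1)
    (hχ0 : ∀ x : EuclideanSpace ℝ (Fin d), 2 < ‖x‖ → χ x = 0) :
    ∃ C > (0:ℝ), ∀ (u : EuclideanSpace ℝ (Fin d) → ℝ) (Mu Mg : ℝ),
      (∀ x, |u x| ≤ Mu) → ContDiff ℝ 1 u → (∀ x, ‖gradient u x‖ ≤ Mg) →
      ∀ (Lu : EuclideanSpace ℝ (Fin d) → ℝ)
        (LuR : ℝ → EuclideanSpace ℝ (Fin d) → ℝ),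
      -- ℒ^κ u(x) exists as a principal value, with value Lu x
      (∀ x, Tendsto (fun ε : ℝ => ∫ z in {z : EuclideanSpace ℝ (Fin d) | ε ≤ ‖z‖},
          (u (x + z) - u x) * κ x z * ‖z‖ ^ (-(d:ℝ) - 1)) (𝓝[>] 0) (𝓝 (Lu x))) →
      ∀ R : ℝ, 1 ≤ R →
      -- ℒ^κ (u χ_R)(x) exists as a principal value, with value LuR R x
      (∀ x, Tendsto (fun ε : ℝ => ∫ z in {z : EuclideanSpace ℝ (Fin d) | ε ≤ ‖z‖},
          (u (x + z) * χ (R⁻¹ • (x + z)) - u x * χ (R⁻¹ • x)) * κ x z * ‖z‖ ^ (-(d:ℝ) - 1))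
        (𝓝[>] 0) (𝓝 (LuR R x))) →
      ∀ x, |LuR R x - χ (R⁻¹ • x) * Lu x| ≤ C * (Mu + Mg) * R ^ (-(1:ℝ)/2) := by
  haveI : Nonempty (Fin d) := ⟨⟨0, hd⟩⟩
  have hκ₁0 : 0 ≤ κ₁ := le_trans (hκnn 0 0) (hκup 0 0)
  obtain ⟨K₁, hK₁0, hK₁⟩ := chi_lip χ hχsm hχc
  obtain ⟨K₂, hK₂0, hK₂⟩ := chi_taylor χ hχsm hχc
  obtain ⟨cf, hcf0, hcf⟩ := aux_far d hd
  obtain ⟨cn, hcn0, hcn⟩ := aux_near d hd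
  refine ⟨κ₁ * cn * (K₂ + K₁) + 2 * κ₁ * cf + 1, by positivity, ?_⟩
  set C : ℝ := κ₁ * cn * (K₂ + K₁) + 2 * κ₁ * cf + 1 with hC
  intro u Mu Mg hu hu1 hgrad Lu LuR hLu R hR hLuR x
  have hR0 : (0:ℝ) < R := lt_of_lt_of_le one_pos hR
  have hMu0 : 0 ≤ Mu := (abs_nonneg _).trans (hu 0)
  have hMg0 : 0 ≤ Mg := (norm_nonneg _).trans (hgrad 0)
  have hχab : ∀ p, |χ p| ≤ 1 := fun p => abs_le.2 ⟨by linarith [(hχ01 p).1], (hχ01 p).2⟩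
  -- Lipschitz bound for u
  have hufd : ∀ y, ‖fderiv ℝ u y‖ ≤ Mg := by
    intro y
    have h0 : ‖fderiv ℝ u y‖ = ‖gradient u y‖ := by
      rw [gradient]; exact (LinearIsometryEquiv.norm_map _ _).symm
    rw [h0]; exact hgrad y
  have hulip : ∀ p q, |u p - u q| ≤ Mg * ‖p - q‖ := by
    intro p q
    have := convex_univ.norm_image_sub_le_of_norm_fderiv_le (f := u) (C := Mg)
      (fun y (_ : y ∈ (Set.univ : Set (EuclideanSpace ℝ (Fin d)))) =>
        (hu1.differentiable one_ne_zero).differentiableAt)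
      (fun y _ => hufd y) (Set.mem_univ q) (Set.mem_univ p)
    simpa [Real.norm_eq_abs] using this
  -- abbreviations (definitional)
  set w : EuclideanSpace ℝ (Fin d) → ℝ := fun z => ‖z‖ ^ (-(d:ℝ) - 1) with hwdef
  have hw0 : ∀ z, 0 ≤ w z := fun z => Real.rpow_nonneg (norm_nonneg z) _
  have hwneg : ∀ z, w (-z) = w z := fun z => by simp [hwdef]
  have hκb : ∀ z, |κ x z| ≤ κ₁ := fun z => by
    rw [abs_of_nonneg (hκnn x z)]; exact hκup x z
  set χRx : ℝ := χ (R⁻¹ • x) with hχRx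
  set F : EuclideanSpace ℝ (Fin d) → ℝ := fun z => (u (x + z) - u x) * κ x z * w z with hFdef
  set G : EuclideanSpace ℝ (Fin d) → ℝ :=
    fun z => (u (x + z) * χ (R⁻¹ • (x + z)) - u x * χRx) * κ x z * w z with hGdef
  set H : EuclideanSpace ℝ (Fin d) → ℝ :=
    fun z => u (x + z) * (χ (R⁻¹ • (x + z)) - χRx) * κ x z * w z with hHdef
  set Φ : EuclideanSpace ℝ (Fin d) → ℝ := fun z => H z + H (-z) with hΦdef
  have hκxm : Measurable (fun z => κ x z) := hκmeas.comp (measurable_prodMk_left (x := x))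
  have huc : Continuous u := hu1.continuous
  have hχcont : Continuous χ := hχsm.continuous
  have hHm : Measurable H := by simp only [hHdef, hwdef]; fun_prop
  have hFm : Measurable F := by simp only [hFdef, hwdef]; fun_prop
  have hGm : Measurable G := by simp only [hGdef, hwdef]; fun_prop
  have hHnm : Measurable (fun z => H (-z)) := hHm.comp measurable_neg
  -- generic integrability criterion on {ε ≤ ‖z‖}
  have key_int : ∀ (φ : EuclideanSpace ℝ (Fin d) → ℝ) (c : ℝ), 0 ≤ c → Measurable φ →
      (∀ z, |φ z| ≤ c * w z) →
      ∀ ε : ℝ, 0 < ε → IntegrableOn φ {z : EuclideanSpace ℝ (Fin d) | ε ≤ ‖z‖} := by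
    intro φ c hc hφm hφb ε hε
    constructor
    · exact (hφm.aestronglyMeasurable).restrict
    · rw [hasFiniteIntegral_iff_norm]
      calc ∫⁻ z in {z : EuclideanSpace ℝ (Fin d) | ε ≤ ‖z‖}, ENNReal.ofReal ‖φ z‖
          ≤ ∫⁻ z in {z : EuclideanSpace ℝ (Fin d) | ε ≤ ‖z‖},
              ENNReal.ofReal c * ENNReal.ofReal (w z) := by
            apply lintegral_mono
            intro z
            dsimp only
            rw [← ENNReal.ofReal_mul hc]
            exact ENNReal.ofReal_le_ofReal (by simpa [Real.norm_eq_abs] using hφb z)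
        _ = ENNReal.ofReal c * ∫⁻ z in {z : EuclideanSpace ℝ (Fin d) | ε ≤ ‖z‖},
              ENNReal.ofReal (w z) :=
            lintegral_const_mul' _ _ ENNReal.ofReal_ne_top
        _ ≤ ENNReal.ofReal c * ENNReal.ofReal (cf / ε) := by
            gcongr
            exact hcf ε hε
        _ < ⊤ := by finiteness
  -- pointwise bounds of |F|, |G|, |H|
  have habs3 : ∀ (p q r A B : ℝ), |p| ≤ A → |q| ≤ B → 0 ≤ r → |p * q * r| ≤ A * B * r := by
    intro p q r A B hp hq hr
    rw [abs_mul, abs_mul, abs_of_nonneg hr]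
    have hA : 0 ≤ A := (abs_nonneg p).trans hp
    have hq0 : 0 ≤ |q| := abs_nonneg q
    have h1 : |p| * |q| ≤ A * B := mul_le_mul hp hq hq0 hA
    exact mul_le_mul_of_nonneg_right h1 hr
  have hFb : ∀ z, |F z| ≤ (2*Mu*κ₁) * w z := by
    intro z
    have h1 : |u (x + z) - u x| ≤ 2 * Mu := by
      have := abs_sub (u (x+z)) (u x)
      calc |u (x + z) - u x| ≤ |u (x+z)| + |u x| := abs_sub _ _
        _ ≤ Mu + Mu := add_le_add (hu _) (hu _)
        _ = 2 * Mu := by ring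
    have := habs3 _ _ _ _ _ h1 (hκb z) (hw0 z)
    calc |F z| ≤ (2*Mu) * κ₁ * w z := this
      _ = (2*Mu*κ₁) * w z := by ring
  have hGb : ∀ z, |G z| ≤ (2*Mu*κ₁) * w z := by
    intro z
    have h1 : |u (x + z) * χ (R⁻¹ • (x + z)) - u x * χRx| ≤ 2 * Mu := by
      calc |u (x + z) * χ (R⁻¹ • (x + z)) - u x * χRx|
          ≤ |u (x + z) * χ (R⁻¹ • (x + z))| + |u x * χRx| := abs_sub _ _
        _ ≤ Mu * 1 + Mu * 1 := by
            rw [abs_mul, abs_mul]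
            exact add_le_add (mul_le_mul (hu _) (hχab _) (abs_nonneg _) hMu0)
              (mul_le_mul (hu _) (hχab _) (abs_nonneg _) hMu0)
        _ = 2 * Mu := by ring
    have := habs3 _ _ _ _ _ h1 (hκb z) (hw0 z)
    calc |G z| ≤ (2*Mu) * κ₁ * w z := this
      _ = (2*Mu*κ₁) * w z := by ring
  have hHb : ∀ z, |H z| ≤ (2*Mu*κ₁) * w z := by
    intro z
    have h1 : |u (x + z) * (χ (R⁻¹ • (x + z)) - χRx)| ≤ 2 * Mu := by
      rw [abs_mul]
      calc |u (x+z)| * |χ (R⁻¹ • (x + z)) - χRx| ≤ Mu * 2 := by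
            apply mul_le_mul (hu _) ?_ (abs_nonneg _) hMu0
            calc |χ (R⁻¹ • (x + z)) - χRx| ≤ |χ (R⁻¹ • (x + z))| + |χRx| := abs_sub _ _
              _ ≤ 1 + 1 := add_le_add (hχab _) (hχab _)
              _ = 2 := by norm_num
        _ = 2 * Mu := by ring
    have := habs3 _ _ _ _ _ h1 (hκb z) (hw0 z)
    calc |H z| ≤ (2*Mu) * κ₁ * w z := this
      _ = (2*Mu*κ₁) * w z := by ring
  have hHnb : ∀ z, |H (-z)| ≤ (2*Mu*κ₁) * w z := fun z => by
    rw [← hwneg z]; exact hHb (-z)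
  -- symmetrized function and its bounds
  set S : EuclideanSpace ℝ (Fin d) → ℝ :=
    fun z => u (x + z) * (χ (R⁻¹ • (x + z)) - χRx) + u (x - z) * (χ (R⁻¹ • (x - z)) - χRx)
    with hSdef
  have hΦeq : ∀ z, Φ z = S z * (κ x z * w z) := by
    intro z
    simp only [hΦdef, hHdef, hSdef]
    rw [show x + -z = x - z from (sub_eq_add_neg x z).symm, ← hκsym x z, hwneg z]
    ring
  have hnormsmul : ∀ z : EuclideanSpace ℝ (Fin d), ‖R⁻¹ • z‖ = R⁻¹ * ‖z‖ := by
    intro z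
    rw [norm_smul, Real.norm_eq_abs, abs_of_pos (inv_pos.2 hR0)]
  have hS2 : ∀ z, |S z| ≤ 4 * Mu := by
    intro z
    have hb : ∀ p : EuclideanSpace ℝ (Fin d), |u p * (χ (R⁻¹ • p) - χRx)| ≤ Mu * 2 := by
      intro p
      rw [abs_mul]
      apply mul_le_mul (hu _) ?_ (abs_nonneg _) hMu0
      calc |χ (R⁻¹ • p) - χRx| ≤ |χ (R⁻¹ • p)| + |χRx| := abs_sub _ _
        _ ≤ 1 + 1 := add_le_add (hχab _) (hχab _)
        _ = 2 := by norm_num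
    calc |S z| ≤ |u (x + z) * (χ (R⁻¹ • (x + z)) - χRx)| +
          |u (x - z) * (χ (R⁻¹ • (x - z)) - χRx)| := abs_add_le _ _
      _ ≤ Mu * 2 + Mu * 2 := add_le_add (hb _) (hb _)
      _ = 4 * Mu := by ring
  have hS1 : ∀ z, |S z| ≤ (2*Mu*K₂ + 2*Mg*K₁) * R⁻¹ * ‖z‖^2 := by
    intro z
    have e0 : S z = u (x + z) * ((χ (R⁻¹ • (x + z)) - χRx) + (χ (R⁻¹ • (x - z)) - χRx))
        + (u (x - z) - u (x + z)) * (χ (R⁻¹ • (x - z)) - χRx) := by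
      simp only [hSdef]; ring
    have e1 : |(χ (R⁻¹ • (x + z)) - χRx) + (χ (R⁻¹ • (x - z)) - χRx)|
        ≤ 2 * K₂ * (R⁻¹ * ‖z‖)^2 := by
      have hq : R⁻¹ • (x + z) = R⁻¹ • x + R⁻¹ • z := smul_add _ _ _
      have hq' : R⁻¹ • (x - z) = R⁻¹ • x - R⁻¹ • z := smul_sub _ _ _
      have := hK₂ (R⁻¹ • x) (R⁻¹ • z)
      rw [hnormsmul z] at this
      calc |(χ (R⁻¹ • (x + z)) - χRx) + (χ (R⁻¹ • (x - z)) - χRx)|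
          = |χ (R⁻¹ • x + R⁻¹ • z) + χ (R⁻¹ • x - R⁻¹ • z) - 2 * χ (R⁻¹ • x)| := by
            rw [hq, hq', hχRx]
            ring_nf
        _ ≤ 2 * K₂ * (R⁻¹ * ‖z‖)^2 := this
    have e2 : |χ (R⁻¹ • (x - z)) - χRx| ≤ K₁ * (R⁻¹ * ‖z‖) := by
      have := hK₁ (R⁻¹ • (x - z)) (R⁻¹ • x)
      have hdd : R⁻¹ • (x - z) - R⁻¹ • x = R⁻¹ • (-z) := by
        rw [← smul_sub]; congr 1; abel
      rw [hdd, hnormsmul (-z), norm_neg] at this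
      exact this
    have e3 : |u (x - z) - u (x + z)| ≤ Mg * (2 * ‖z‖) := by
      have := hulip (x - z) (x + z)
      have hn : ‖(x - z) - (x + z)‖ ≤ 2 * ‖z‖ := by
        have : (x - z) - (x + z) = -z - z := by abel
        rw [this]
        calc ‖-z - z‖ ≤ ‖-z‖ + ‖z‖ := norm_sub_le _ _
          _ = 2 * ‖z‖ := by rw [norm_neg]; ring
      calc |u (x - z) - u (x + z)| ≤ Mg * ‖(x - z) - (x + z)‖ := this
        _ ≤ Mg * (2 * ‖z‖) := mul_le_mul_of_nonneg_left hn hMg0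
    have hiv : R⁻¹ * R⁻¹ ≤ R⁻¹ := by
      have h1 : R⁻¹ ≤ 1 := by
        rw [inv_le_one_iff₀]; right; exact hR
      nlinarith [inv_pos.2 hR0]
    have hmain : |S z| ≤ Mu * (2 * K₂ * (R⁻¹ * ‖z‖)^2) + (Mg * (2 * ‖z‖)) * (K₁ * (R⁻¹ * ‖z‖)) := by
      rw [e0]
      calc |u (x + z) * ((χ (R⁻¹ • (x + z)) - χRx) + (χ (R⁻¹ • (x - z)) - χRx))
            + (u (x - z) - u (x + z)) * (χ (R⁻¹ • (x - z)) - χRx)|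
          ≤ |u (x + z)| * |(χ (R⁻¹ • (x + z)) - χRx) + (χ (R⁻¹ • (x - z)) - χRx)|
            + |u (x - z) - u (x + z)| * |χ (R⁻¹ • (x - z)) - χRx| := by
            refine (abs_add_le _ _).trans ?_
            rw [abs_mul, abs_mul]
        _ ≤ Mu * (2 * K₂ * (R⁻¹ * ‖z‖)^2) + (Mg * (2 * ‖z‖)) * (K₁ * (R⁻¹ * ‖z‖)) := by
            refine add_le_add ?_ ?_
            · exact mul_le_mul (hu _) e1 (abs_nonneg _) hMu0
            · exact mul_le_mul e3 e2 (abs_nonneg _) (by positivity)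
    refine hmain.trans ?_
    have key : 0 ≤ Mu * K₂ * ‖z‖^2 * (R⁻¹ - R⁻¹ * R⁻¹) :=
      mul_nonneg (by positivity) (sub_nonneg.2 hiv)
    nlinarith [key]
  -- power comparison
  have hpow : ∀ z : EuclideanSpace ℝ (Fin d), ‖z‖^2 * w z ≤ ‖z‖ ^ ((1:ℝ)-(d:ℝ)) := by
    intro z
    rcases eq_or_lt_of_le (norm_nonneg z) with hz | hz
    · have hne : -(d:ℝ) - 1 ≠ 0 := by
        have : (0:ℝ) ≤ (d:ℝ) := Nat.cast_nonneg d
        intro hcon; nlinarith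
      rw [hwdef]
      dsimp only
      rw [← hz, Real.zero_rpow hne]
      simpa using Real.rpow_nonneg (le_refl (0:ℝ)) _
    · apply le_of_eq
      rw [hwdef]
      dsimp only
      rw [show ‖z‖^2 = ‖z‖ ^ ((2:ℕ):ℝ) from (Real.rpow_natCast _ 2).symm,
        ← Real.rpow_add hz]
      congr 1
      push_cast
      ring
  -- the two pointwise bounds on Φ
  have hΦfar : ∀ z, |Φ z| ≤ (4*Mu*κ₁) * w z := by
    intro z
    rw [hΦeq z, abs_mul, abs_mul, abs_of_nonneg (hw0 z)]
    calc |S z| * (|κ x z| * w z) ≤ (4*Mu) * (κ₁ * w z) := by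
          apply mul_le_mul (hS2 z) ?_ (by positivity) (by positivity)
          exact mul_le_mul_of_nonneg_right (hκb z) (hw0 z)
      _ = (4*Mu*κ₁) * w z := by ring
  have hΦnear : ∀ z, |Φ z| ≤ (κ₁ * (2*Mu*K₂ + 2*Mg*K₁) * R⁻¹) * ‖z‖ ^ ((1:ℝ)-(d:ℝ)) := by
    intro z
    rw [hΦeq z, abs_mul, abs_mul, abs_of_nonneg (hw0 z)]
    calc |S z| * (|κ x z| * w z)
        ≤ ((2*Mu*K₂ + 2*Mg*K₁) * R⁻¹ * ‖z‖^2) * (κ₁ * w z) := by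
          apply mul_le_mul (hS1 z) ?_ (by positivity) (by positivity)
          exact mul_le_mul_of_nonneg_right (hκb z) (hw0 z)
      _ = (κ₁ * (2*Mu*K₂ + 2*Mg*K₁) * R⁻¹) * (‖z‖^2 * w z) := by ring
      _ ≤ (κ₁ * (2*Mu*K₂ + 2*Mg*K₁) * R⁻¹) * ‖z‖ ^ ((1:ℝ)-(d:ℝ)) := by
          exact mul_le_mul_of_nonneg_left (hpow z) (by positivity)
  -- radius
  set r : ℝ := Real.sqrt R with hrdef
  have hr0 : 0 < r := Real.sqrt_pos.2 hR0
  have hrr : r * r = R := Real.mul_self_sqrt hR0.le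
  set B : ℝ := (κ₁ * (2*Mu*K₂ + 2*Mg*K₁) * R⁻¹) * (cn * r) + (4*Mu*κ₁) * (cf / r) with hBdef
  have hB0 : 0 ≤ B := by positivity
  -- the uniform bound on the symmetrized integral
  have hΦbound : ∀ ε : ℝ, 0 < ε →
      |∫ z in {z : EuclideanSpace ℝ (Fin d) | ε ≤ ‖z‖}, Φ z| ≤ B := by
    intro ε hε
    have h1 : |∫ z in {z : EuclideanSpace ℝ (Fin d) | ε ≤ ‖z‖}, Φ z|
        ≤ (∫⁻ z in {z : EuclideanSpace ℝ (Fin d) | ε ≤ ‖z‖}, ENNReal.ofReal ‖Φ z‖).toReal := by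
      rw [← Real.norm_eq_abs]
      exact norm_integral_le_lintegral_norm Φ
    refine h1.trans ?_
    have h2 : ∫⁻ z in {z : EuclideanSpace ℝ (Fin d) | ε ≤ ‖z‖}, ENNReal.ofReal ‖Φ z‖
        ≤ ENNReal.ofReal B := by
      calc ∫⁻ z in {z : EuclideanSpace ℝ (Fin d) | ε ≤ ‖z‖}, ENNReal.ofReal ‖Φ z‖
          ≤ ∫⁻ z, ENNReal.ofReal ‖Φ z‖ := setLIntegral_le_lintegral _ _
        _ = (∫⁻ z in ball (0:EuclideanSpace ℝ (Fin d)) r, ENNReal.ofReal ‖Φ z‖)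
            + ∫⁻ z in (ball (0:EuclideanSpace ℝ (Fin d)) r)ᶜ, ENNReal.ofReal ‖Φ z‖ :=
            (lintegral_add_compl _ measurableSet_ball).symm
        _ ≤ ENNReal.ofReal ((κ₁ * (2*Mu*K₂ + 2*Mg*K₁) * R⁻¹) * (cn * r))
            + ENNReal.ofReal ((4*Mu*κ₁) * (cf / r)) := by
            refine add_le_add ?_ ?_
            · calc ∫⁻ z in ball (0:EuclideanSpace ℝ (Fin d)) r, ENNReal.ofReal ‖Φ z‖
                  ≤ ∫⁻ z in ball (0:EuclideanSpace ℝ (Fin d)) r,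
                      ENNReal.ofReal (κ₁ * (2*Mu*K₂ + 2*Mg*K₁) * R⁻¹)
                      * ENNReal.ofReal (‖z‖ ^ ((1:ℝ)-(d:ℝ))) := by
                    apply lintegral_mono
                    intro z
                    dsimp only
                    rw [← ENNReal.ofReal_mul (by positivity)]
                    exact ENNReal.ofReal_le_ofReal (by
                      simpa [Real.norm_eq_abs] using hΦnear z)
                _ = ENNReal.ofReal (κ₁ * (2*Mu*K₂ + 2*Mg*K₁) * R⁻¹)
                      * ∫⁻ z in ball (0:EuclideanSpace ℝ (Fin d)) r,
                        ENNReal.ofReal (‖z‖ ^ ((1:ℝ)-(d:ℝ))) :=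
                    lintegral_const_mul' _ _ ENNReal.ofReal_ne_top
                _ ≤ ENNReal.ofReal (κ₁ * (2*Mu*K₂ + 2*Mg*K₁) * R⁻¹) * ENNReal.ofReal (cn * r) := by
                    gcongr
                    exact hcn r hr0
                _ = ENNReal.ofReal ((κ₁ * (2*Mu*K₂ + 2*Mg*K₁) * R⁻¹) * (cn * r)) :=
                    (ENNReal.ofReal_mul (by positivity)).symm
            · have hsetc : (ball (0:EuclideanSpace ℝ (Fin d)) r)ᶜ
                  = {z : EuclideanSpace ℝ (Fin d) | r ≤ ‖z‖} := by
                ext z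
                simp [mem_ball, dist_zero_right, not_lt]
              rw [hsetc]
              calc ∫⁻ z in {z : EuclideanSpace ℝ (Fin d) | r ≤ ‖z‖}, ENNReal.ofReal ‖Φ z‖
                  ≤ ∫⁻ z in {z : EuclideanSpace ℝ (Fin d) | r ≤ ‖z‖},
                      ENNReal.ofReal (4*Mu*κ₁) * ENNReal.ofReal (w z) := by
                    apply lintegral_mono
                    intro z
                    dsimp only
                    rw [← ENNReal.ofReal_mul (by positivity)]
                    exact ENNReal.ofReal_le_ofReal (by
                      simpa [Real.norm_eq_abs] using hΦfar z)
                _ = ENNReal.ofReal (4*Mu*κ₁)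
                      * ∫⁻ z in {z : EuclideanSpace ℝ (Fin d) | r ≤ ‖z‖}, ENNReal.ofReal (w z) :=
                    lintegral_const_mul' _ _ ENNReal.ofReal_ne_top
                _ ≤ ENNReal.ofReal (4*Mu*κ₁) * ENNReal.ofReal (cf / r) := by
                    gcongr
                    exact hcf r hr0
                _ = ENNReal.ofReal ((4*Mu*κ₁) * (cf / r)) :=
                    (ENNReal.ofReal_mul (by positivity)).symm
        _ = ENNReal.ofReal B := by
            rw [hBdef, ENNReal.ofReal_add (by positivity) (by positivity)]
    calc (∫⁻ z in {z : EuclideanSpace ℝ (Fin d) | ε ≤ ‖z‖}, ENNReal.ofReal ‖Φ z‖).toReal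
        ≤ (ENNReal.ofReal B).toReal := ENNReal.toReal_mono ENNReal.ofReal_ne_top h2
      _ = B := ENNReal.toReal_ofReal hB0
  -- integral identities for each ε > 0
  have hident : ∀ ε : ℝ, 0 < ε →
      (∫ z in {z : EuclideanSpace ℝ (Fin d) | ε ≤ ‖z‖}, G z)
        - χRx * ∫ z in {z : EuclideanSpace ℝ (Fin d) | ε ≤ ‖z‖}, F z
      = (∫ z in {z : EuclideanSpace ℝ (Fin d) | ε ≤ ‖z‖}, Φ z) / 2 := by
    intro ε hε
    have hsεm : MeasurableSet {z : EuclideanSpace ℝ (Fin d) | ε ≤ ‖z‖} :=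
      measurableSet_le measurable_const measurable_norm
    have hFi := key_int F (2*Mu*κ₁) (by positivity) hFm hFb ε hε
    have hGi := key_int G (2*Mu*κ₁) (by positivity) hGm hGb ε hε
    have hHi := key_int H (2*Mu*κ₁) (by positivity) hHm hHb ε hε
    have hHni := key_int (fun z => H (-z)) (2*Mu*κ₁) (by positivity) hHnm hHnb ε hε
    have step1 : (∫ z in {z : EuclideanSpace ℝ (Fin d) | ε ≤ ‖z‖}, G z)
        - χRx * ∫ z in {z : EuclideanSpace ℝ (Fin d) | ε ≤ ‖z‖}, F z
        = ∫ z in {z : EuclideanSpace ℝ (Fin d) | ε ≤ ‖z‖}, H z := by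
      rw [← integral_const_mul, ← integral_sub hGi (hFi.const_mul χRx)]
      apply setIntegral_congr_fun hsεm
      intro z _
      simp only [hGdef, hFdef, hHdef]
      ring
    have step2 : (∫ z in {z : EuclideanSpace ℝ (Fin d) | ε ≤ ‖z‖}, (fun z => H (-z)) z)
        = ∫ z in {z : EuclideanSpace ℝ (Fin d) | ε ≤ ‖z‖}, H z := by
      have hind : Set.indicator {z : EuclideanSpace ℝ (Fin d) | ε ≤ ‖z‖} (fun z => H (-z))
          = fun z => (Set.indicator {z : EuclideanSpace ℝ (Fin d) | ε ≤ ‖z‖} H) (-z) := by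
        funext z
        simp [Set.indicator_apply, Set.mem_setOf_eq, norm_neg]
      calc ∫ z in {z : EuclideanSpace ℝ (Fin d) | ε ≤ ‖z‖}, (fun z => H (-z)) z
          = ∫ z, Set.indicator {z : EuclideanSpace ℝ (Fin d) | ε ≤ ‖z‖} (fun z => H (-z)) z :=
            (integral_indicator hsεm).symm
        _ = ∫ z, (Set.indicator {z : EuclideanSpace ℝ (Fin d) | ε ≤ ‖z‖} H) (-z) := by
            rw [hind]
        _ = ∫ z, Set.indicator {z : EuclideanSpace ℝ (Fin d) | ε ≤ ‖z‖} H z :=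
            integral_neg_eq_self _ _
        _ = ∫ z in {z : EuclideanSpace ℝ (Fin d) | ε ≤ ‖z‖}, H z := integral_indicator hsεm
    have step3 : (∫ z in {z : EuclideanSpace ℝ (Fin d) | ε ≤ ‖z‖}, Φ z)
        = 2 * ∫ z in {z : EuclideanSpace ℝ (Fin d) | ε ≤ ‖z‖}, H z := by
      calc ∫ z in {z : EuclideanSpace ℝ (Fin d) | ε ≤ ‖z‖}, Φ z
          = ∫ z in {z : EuclideanSpace ℝ (Fin d) | ε ≤ ‖z‖}, (H z + (fun z => H (-z)) z) := rfl
        _ = (∫ z in {z : EuclideanSpace ℝ (Fin d) | ε ≤ ‖z‖}, H z)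
            + ∫ z in {z : EuclideanSpace ℝ (Fin d) | ε ≤ ‖z‖}, (fun z => H (-z)) z :=
            integral_add hHi hHni
        _ = 2 * ∫ z in {z : EuclideanSpace ℝ (Fin d) | ε ≤ ‖z‖}, H z := by
            rw [step2]; ring
    rw [step1, step3]
    ring
  -- pass to the limit
  have hTend : Tendsto (fun ε : ℝ =>
      (∫ z in {z : EuclideanSpace ℝ (Fin d) | ε ≤ ‖z‖}, G z)
        - χRx * ∫ z in {z : EuclideanSpace ℝ (Fin d) | ε ≤ ‖z‖}, F z)
      (𝓝[>] 0) (𝓝 (LuR R x - χRx * Lu x)) := (hLuR x).sub ((hLu x).const_mul χRx)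
  have hlimle : |LuR R x - χRx * Lu x| ≤ B / 2 := by
    have habs : Tendsto (fun ε : ℝ =>
        |(∫ z in {z : EuclideanSpace ℝ (Fin d) | ε ≤ ‖z‖}, G z)
          - χRx * ∫ z in {z : EuclideanSpace ℝ (Fin d) | ε ≤ ‖z‖}, F z|)
        (𝓝[>] 0) (𝓝 |LuR R x - χRx * Lu x|) := hTend.abs
    refine le_of_tendsto habs ?_
    filter_upwards [self_mem_nhdsWithin] with ε hε
    have hε0 : (0:ℝ) < ε := hε
    rw [hident ε hε0, abs_div]
    rw [abs_of_pos (show (0:ℝ) < 2 by norm_num)]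
    exact div_le_div_of_nonneg_right (hΦbound ε hε0) (by norm_num) |>.trans_eq rfl
  refine hlimle.trans ?_
  -- final arithmetic
  have hρ : R ^ (-(1:ℝ)/2) = r⁻¹ := by
    rw [show (-(1:ℝ)/2) = -(1/2) by ring, Real.rpow_neg hR0.le, ← Real.sqrt_eq_rpow]
  rw [hρ]
  have hRinv : R⁻¹ * r = r⁻¹ := by
    rw [← hrr, mul_inv, mul_assoc, inv_mul_cancel₀ hr0.ne', mul_one]
  have hBeq : B / 2 = (κ₁ * (Mu*K₂ + Mg*K₁) * cn + 2*Mu*κ₁*cf) * r⁻¹ := by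
    rw [hBdef, div_eq_mul_inv cf r]
    have heq : (κ₁ * (2*Mu*K₂ + 2*Mg*K₁) * R⁻¹) * (cn * r)
        = 2 * (κ₁ * (Mu*K₂ + Mg*K₁) * cn) * (R⁻¹ * r) := by ring
    rw [heq, hRinv]
    ring
  rw [hBeq]
  apply mul_le_mul_of_nonneg_right ?_ (by positivity)
  rw [hC]
  nlinarith [mul_nonneg (mul_nonneg (mul_nonneg hκ₁0 hcn0.le) hK₁0) hMu0,
    mul_nonneg (mul_nonneg (mul_nonneg hκ₁0 hcn0.le) hK₂0) hMg0,
    mul_nonneg (mul_nonneg hκ₁0 hcf0.le) hMg0, add_nonneg hMu0 hMg0,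
    mul_nonneg hMu0 hMg0]
end

section
/- (Analytic Krylov-type estimate) Let d ≥ 2 and T > 0. There exists a constant C > 0 depending only on d such that for every nonnegative measurable f: ℝ^d → [0,∞], sup_{x∈ℝ^d} ∫_0^T ∫_{ℝ^d} s (|x−y| + s)^{−d−1} f(y) dy ds ≤ C · sup_{x∈ℝ^d} ∫_{ℝ^d} f(x−y) (|y|^{1−d} ∧ T²|y|^{−d−1}) dy. -/
open MeasureTheory Real


open MeasureTheory Real Set

lemma bound1 (d : ℕ) (T : ℝ) (hT : 0 < T) (r : ℝ) (hr : 0 < r) :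
    ∫⁻ s in Set.Ioo (0:ℝ) T, ENNReal.ofReal (s * (r + s) ^ (-(d:ℝ) - 1)) ≤
      ENNReal.ofReal (T ^ 2 * r ^ (-(d:ℝ) - 1)) := by
  have hd0 : (0:ℝ) ≤ d := Nat.cast_nonneg d
  calc ∫⁻ s in Set.Ioo (0:ℝ) T, ENNReal.ofReal (s * (r + s) ^ (-(d:ℝ) - 1))
      ≤ ∫⁻ _ in Set.Ioo (0:ℝ) T, ENNReal.ofReal (T * r ^ (-(d:ℝ) - 1)) := by
        refine setLIntegral_mono measurable_const fun s hs => ?_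
        refine ENNReal.ofReal_le_ofReal ?_
        refine mul_le_mul hs.2.le ?_ (rpow_nonneg (by linarith [hs.1]) _) hT.le
        exact rpow_le_rpow_of_nonpos hr (by linarith [hs.1]) (by linarith)
    _ = ENNReal.ofReal (T * r ^ (-(d:ℝ) - 1)) * ENNReal.ofReal T := by
        rw [setLIntegral_const, Real.volume_Ioo, sub_zero]
    _ = ENNReal.ofReal (T ^ 2 * r ^ (-(d:ℝ) - 1)) := by
        rw [← ENNReal.ofReal_mul (by positivity)]; ring_nf

lemma bound2 (d : ℕ) (hd : 2 ≤ d) (T : ℝ) (r : ℝ) (hr : 0 < r) :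
    ∫⁻ s in Set.Ioo (0:ℝ) T, ENNReal.ofReal (s * (r + s) ^ (-(d:ℝ) - 1)) ≤
      ENNReal.ofReal (2 * r ^ (1 - (d:ℝ))) := by
  have hd1 : (1:ℝ) < (d:ℝ) := by exact_mod_cast by omega
  have hd2 : (2:ℝ) ≤ (d:ℝ) := by exact_mod_cast hd
  have hmeas : Measurable fun s : ℝ => ENNReal.ofReal ((r + s) ^ (-(d:ℝ))) := by fun_prop
  calc ∫⁻ s in Set.Ioo (0:ℝ) T, ENNReal.ofReal (s * (r + s) ^ (-(d:ℝ) - 1))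
      ≤ ∫⁻ s in Set.Ioi (0:ℝ), ENNReal.ofReal (s * (r + s) ^ (-(d:ℝ) - 1)) :=
        lintegral_mono_set Set.Ioo_subset_Ioi_self
    _ ≤ ∫⁻ s in Set.Ioi (0:ℝ), ENNReal.ofReal ((r + s) ^ (-(d:ℝ))) := by
        refine setLIntegral_mono hmeas fun s hs => ?_
        refine ENNReal.ofReal_le_ofReal ?_
        have hrs : (0:ℝ) < r + s := by linarith [hs.out]
        have h1 : (r + s) ^ (-(d:ℝ)) = (r + s) ^ (1:ℝ) * (r + s) ^ (-(d:ℝ) - 1) := by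
          rw [← rpow_add hrs]; ring_nf
        rw [h1, rpow_one]
        exact mul_le_mul_of_nonneg_right (by linarith [hs.out]) (rpow_nonneg hrs.le _)
    _ = (∫⁻ s in Set.Ioc (0:ℝ) r, ENNReal.ofReal ((r + s) ^ (-(d:ℝ)))) +
        ∫⁻ s in Set.Ioi r, ENNReal.ofReal ((r + s) ^ (-(d:ℝ))) := by
        rw [← lintegral_union measurableSet_Ioi (Set.Ioc_disjoint_Ioi le_rfl),
          Set.Ioc_union_Ioi_eq_Ioi hr.le]
    _ ≤ ENNReal.ofReal (r ^ (1 - (d:ℝ))) + ENNReal.ofReal (r ^ (1 - (d:ℝ))) := by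
        gcongr
        · calc ∫⁻ s in Set.Ioc (0:ℝ) r, ENNReal.ofReal ((r + s) ^ (-(d:ℝ)))
              ≤ ∫⁻ _ in Set.Ioc (0:ℝ) r, ENNReal.ofReal (r ^ (-(d:ℝ))) := by
                refine setLIntegral_mono measurable_const fun s hs => ?_
                exact ENNReal.ofReal_le_ofReal
                  (rpow_le_rpow_of_nonpos hr (by linarith [hs.1]) (by linarith))
            _ = ENNReal.ofReal (r ^ (-(d:ℝ))) * ENNReal.ofReal r := by
                rw [setLIntegral_const, Real.volume_Ioc, sub_zero]
            _ = ENNReal.ofReal (r ^ (1 - (d:ℝ))) := by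
                rw [← ENNReal.ofReal_mul (by positivity),
                  show (1 - (d:ℝ)) = -(d:ℝ) + 1 by ring, rpow_add hr, rpow_one]
        · calc ∫⁻ s in Set.Ioi r, ENNReal.ofReal ((r + s) ^ (-(d:ℝ)))
              ≤ ∫⁻ s in Set.Ioi r, ENNReal.ofReal (s ^ (-(d:ℝ))) := by
                refine setLIntegral_mono (by fun_prop) fun s hs => ?_
                exact ENNReal.ofReal_le_ofReal
                  (rpow_le_rpow_of_nonpos (hr.trans hs.out) (by linarith) (by linarith))
            _ = ENNReal.ofReal (∫ s in Set.Ioi r, s ^ (-(d:ℝ))) := by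
                rw [ofReal_integral_eq_lintegral_ofReal
                  (integrableOn_Ioi_rpow_of_lt (by linarith) hr)
                  ((ae_restrict_iff' measurableSet_Ioi).2 (Filter.Eventually.of_forall
                    fun s hs => rpow_nonneg (hr.trans hs.out).le _))]
            _ ≤ ENNReal.ofReal (r ^ (1 - (d:ℝ))) := by
                rw [integral_Ioi_rpow_of_lt (by linarith) hr]
                refine ENNReal.ofReal_le_ofReal ?_
                have hx : (0:ℝ) ≤ r ^ (-(d:ℝ) + 1) := rpow_nonneg hr.le _
                have h2 : -r ^ (-(d:ℝ) + 1) / (-(d:ℝ) + 1)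
                    = r ^ (-(d:ℝ) + 1) / ((d:ℝ) - 1) := by
                  rw [div_eq_div_iff (by linarith) (by linarith)]; ring
                rw [h2, show (1 - (d:ℝ)) = -(d:ℝ) + 1 by ring]
                exact div_le_self hx (by linarith)
    _ = ENNReal.ofReal (2 * r ^ (1 - (d:ℝ))) := by
        rw [← ENNReal.ofReal_add (by positivity) (by positivity), two_mul]

lemma key (d : ℕ) (hd : 2 ≤ d) (T : ℝ) (hT : 0 < T) (r : ℝ) (hr : 0 < r) :
    ∫⁻ s in Set.Ioo (0:ℝ) T, ENNReal.ofReal (s * (r + s) ^ (-(d:ℝ) - 1)) ≤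
      ENNReal.ofReal 2 *
        ENNReal.ofReal (min (r ^ (1 - (d:ℝ))) (T ^ 2 * r ^ (-(d:ℝ) - 1))) := by
  rw [← ENNReal.ofReal_mul (by norm_num)]
  rcases le_total (r ^ (1 - (d:ℝ))) (T ^ 2 * r ^ (-(d:ℝ) - 1)) with h | h
  · rw [min_eq_left h]
    exact bound2 d hd T r hr
  · rw [min_eq_right h]
    refine (bound1 d T hT r hr).trans (ENNReal.ofReal_le_ofReal ?_)
    nlinarith [mul_nonneg (sq_nonneg T) (rpow_nonneg hr.le (-(d:ℝ) - 1))]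

open MeasureTheory Real Set

lemma lintegral_sub_left_eq (G : Type*) [NormedAddCommGroup G] [MeasurableSpace G]
    [BorelSpace G] (μ : Measure G) [μ.IsAddLeftInvariant] [μ.IsNegInvariant]
    (F : G → ENNReal) (x : G) : ∫⁻ y, F (x - y) ∂μ = ∫⁻ y, F y ∂μ := by
  have h1 : ∫⁻ y, F (x + y) ∂μ = ∫⁻ y, F y ∂μ := lintegral_add_left_eq_self F x
  have h2 : ∫⁻ y, F (x + (-y)) ∂μ = ∫⁻ y, F (x + y) ∂μ := by
    have := lintegral_map_equiv (μ := μ) (fun y => F (x + y)) (MeasurableEquiv.neg G)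
    rw [show ((MeasurableEquiv.neg G : G ≃ᵐ G) : G → G) = (fun y => -y) from rfl] at this
    rw [← this]
    congr 1
    exact Measure.map_neg_eq_self μ
  simp_rw [← sub_eq_add_neg] at h2
  rw [h2, h1]

/-- Analytic Krylov-type estimate: the space-time potential of a nonnegative `f`
against the kernel `s(|x-y|+s)^{-d-1}` is controlled by the Kato-class quantity
`K¹_f(T) = sup_x ∫ f(x-y) (|y|^{1-d} ∧ T²|y|^{-d-1}) dy`. -/
theorem stmt_9 (d : ℕ) (hd : 2 ≤ d) :
    ∃ C > (0:ℝ), ∀ T : ℝ, 0 < T → ∀ f : EuclideanSpace ℝ (Fin d) → ENNReal,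
      Measurable f →
      (⨆ x : EuclideanSpace ℝ (Fin d),
        ∫⁻ s in Set.Ioo (0:ℝ) T, ∫⁻ y,
          ENNReal.ofReal (s * (‖x - y‖ + s) ^ (-(d:ℝ) - 1)) * f y) ≤
      ENNReal.ofReal C * ⨆ x : EuclideanSpace ℝ (Fin d),
        ∫⁻ y, f (x - y) *
          ENNReal.ofReal (min (‖y‖ ^ (1 - (d:ℝ))) (T ^ 2 * ‖y‖ ^ (-(d:ℝ) - 1))) := by
  set E := EuclideanSpace ℝ (Fin d)
  haveI : Nontrivial E := by
    have : Nonempty (Fin d) := ⟨⟨0, by omega⟩⟩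
    exact inferInstanceAs (Nontrivial (EuclideanSpace ℝ (Fin d)))
  refine ⟨2, by norm_num, fun T hT f hf => ?_⟩
  set RHS := ⨆ x : E, ∫⁻ y, f (x - y) *
      ENNReal.ofReal (min (‖y‖ ^ (1 - (d:ℝ))) (T ^ 2 * ‖y‖ ^ (-(d:ℝ) - 1))) with hRHS
  refine iSup_le fun x => ?_
  -- Tonelli swap
  have hswap : (∫⁻ s in Set.Ioo (0:ℝ) T, ∫⁻ y,
      ENNReal.ofReal (s * (‖x - y‖ + s) ^ (-(d:ℝ) - 1)) * f y)
      = ∫⁻ y, ∫⁻ s in Set.Ioo (0:ℝ) T,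
        ENNReal.ofReal (s * (‖x - y‖ + s) ^ (-(d:ℝ) - 1)) * f y := by
    refine lintegral_lintegral_swap ?_
    fun_prop
  rw [hswap]
  have hae : ∀ᵐ y : E ∂volume, y ≠ x := by
    rw [MeasureTheory.ae_iff]
    simpa using measure_singleton (μ := (volume : Measure E)) x
  have hstep : (∫⁻ y, ∫⁻ s in Set.Ioo (0:ℝ) T,
      ENNReal.ofReal (s * (‖x - y‖ + s) ^ (-(d:ℝ) - 1)) * f y)
      ≤ ∫⁻ y, ENNReal.ofReal 2 *
          (f y * ENNReal.ofReal (min (‖x - y‖ ^ (1 - (d:ℝ)))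
            (T ^ 2 * ‖x - y‖ ^ (-(d:ℝ) - 1)))) := by
    refine lintegral_mono_ae (hae.mono fun y hy => ?_)
    have hr : 0 < ‖x - y‖ := by
      rw [norm_pos_iff]
      exact sub_ne_zero.mpr (Ne.symm hy)
    rw [lintegral_mul_const _ (by fun_prop)]
    calc (∫⁻ s in Set.Ioo (0:ℝ) T,
          ENNReal.ofReal (s * (‖x - y‖ + s) ^ (-(d:ℝ) - 1))) * f y
        ≤ (ENNReal.ofReal 2 * ENNReal.ofReal (min (‖x - y‖ ^ (1 - (d:ℝ)))
            (T ^ 2 * ‖x - y‖ ^ (-(d:ℝ) - 1)))) * f y :=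
          mul_le_mul_left (key d hd T hT _ hr) _
      _ = ENNReal.ofReal 2 * (f y * ENNReal.ofReal (min (‖x - y‖ ^ (1 - (d:ℝ)))
            (T ^ 2 * ‖x - y‖ ^ (-(d:ℝ) - 1)))) := by
          rw [mul_assoc]; congr 1; exact mul_comm _ _
  refine hstep.trans ?_
  rw [lintegral_const_mul' _ _ ENNReal.ofReal_ne_top]
  have hsub : (∫⁻ y, f y * ENNReal.ofReal (min (‖x - y‖ ^ (1 - (d:ℝ)))
      (T ^ 2 * ‖x - y‖ ^ (-(d:ℝ) - 1))))
      = ∫⁻ y, f (x - y) * ENNReal.ofReal (min (‖y‖ ^ (1 - (d:ℝ)))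
        (T ^ 2 * ‖y‖ ^ (-(d:ℝ) - 1))) := by
    have := lintegral_sub_left_eq E volume
      (fun y => f (x - y) * ENNReal.ofReal (min (‖y‖ ^ (1 - (d:ℝ)))
        (T ^ 2 * ‖y‖ ^ (-(d:ℝ) - 1)))) x
    simp only [sub_sub_cancel] at this
    exact this
  rw [hsub]
  refine mul_le_mul_right ?_ _
  exact le_iSup (fun x : E => ∫⁻ y, f (x - y) * ENNReal.ofReal
    (min (‖y‖ ^ (1 - (d:ℝ))) (T ^ 2 * ‖y‖ ^ (-(d:ℝ) - 1)))) x
end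

section
/- Let d ≥ 1, γ ∈ (0,1), M > 0, and let u: ℝ^d → ℝ^d be bounded and continuously differentiable with sup_x ‖∇u(x)‖ ≤ 1/2 (operator norm) and ‖∇u(x) − ∇u(y)‖ ≤ M |x−y|^γ for all x, y. Set Φ(x) := x + u(x), so that Φ is a bi-Lipschitz bijection of ℝ^d, and define g̃(x,z) := Φ(Φ^{−1}(x) + z) − x. Then: (i) |g̃(x,z)| ≤ (3/2)|z| for all x, z ∈ ℝ^d; and (ii) there exists a constant C > 0 depending only on M such that |g̃(x,z) − g̃(y,z)| ≤ C |x−y| · |z|^γ for all x, y, z ∈ ℝ^d. -/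
open NNReal

/-!
Since `u` is `1/2`-Lipschitz, `Φ = id + u` is onto (Banach's fixed point theorem for
`w ↦ x - u w`) and `Φ⁻¹` is `2`-Lipschitz. Writing `a = Φ⁻¹ x`, so that `x = a + u a`,
gives `g̃(x, z) = z + (u (a + z) - u a)`, whence (i). For (ii), the mean value inequality
bounds the Lipschitz constant of the increment `w ↦ u (w + z) - u w` by the Hölder modulus
`M ‖z‖^γ` of `∇u`, and composing with `Φ⁻¹` costs the factor `2`.
-/

section Perturbation

variable {E : Type*} [NormedAddCommGroup E] {u : E → E} {K : ℝ≥0}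

theorem LipschitzWith.surjective_id_add [CompleteSpace E] (hu : LipschitzWith K u)
    (hK : K < 1) : Function.Surjective fun w => w + u w := by
  intro x
  have hc : ContractingWith K fun w => x - u w :=
    ⟨hK, .of_dist_le_mul fun a b => by rw [dist_sub_left]; exact hu.dist_le_mul a b⟩
  exact ⟨hc.fixedPoint _, eq_sub_iff_add_eq.mp hc.fixedPoint_isFixedPt.symm⟩

theorem LipschitzWith.one_sub_mul_norm_sub_le (hu : LipschitzWith K u) (a b : E) :
    (1 - K) * ‖a - b‖ ≤ ‖(a + u a) - (b + u b)‖ := by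
  have hsplit : a - b = ((a + u a) - (b + u b)) - (u a - u b) := by abel
  have htri : ‖a - b‖ ≤ ‖(a + u a) - (b + u b)‖ + ‖u a - u b‖ :=
    hsplit ▸ _root_.norm_sub_le _ _
  linarith [hu.norm_sub_le a b]

theorem id_add_invFun_add_sub (hs : Function.Surjective fun w => w + u w) (x z : E) :
    (Function.invFun (fun w => w + u w) x + z) +
        u (Function.invFun (fun w => w + u w) x + z) - x =
      z + (u (Function.invFun (fun w => w + u w) x + z) -
        u (Function.invFun (fun w => w + u w) x)) := by
  set a := Function.invFun (fun w => w + u w) x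
  have ha : a + u a = x := Function.rightInverse_invFun hs x
  rw [← ha]
  abel

end Perturbation

theorem norm_sub_sub_translate_le {E F : Type*} [NormedAddCommGroup E] [NormedSpace ℝ E]
    [NormedAddCommGroup F] [NormedSpace ℝ F] {u : E → F} (hu : Differentiable ℝ u) {L : ℝ}
    (z : E) (hL : ∀ w, ‖fderiv ℝ u (w + z) - fderiv ℝ u w‖ ≤ L) (a b : E) :
    ‖(u (a + z) - u a) - (u (b + z) - u b)‖ ≤ L * ‖a - b‖ := by
  have hderiv : ∀ w, HasFDerivAt (fun w => u (w + z) - u w)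
      (fderiv ℝ u (w + z) - fderiv ℝ u w) w := fun w =>
    ((hasFDerivAt_comp_add_right z).2 (hu (w + z)).hasFDerivAt).sub (hu w).hasFDerivAt
  exact convex_univ.norm_image_sub_le_of_norm_hasFDerivWithin_le
    (fun w _ => (hderiv w).hasFDerivWithinAt) (fun w _ => hL w) (Set.mem_univ b) (Set.mem_univ a)

/-- Estimates on `g̃(x,z) = Φ(Φ⁻¹(x) + z) - x` where `Φ = id + u` and `u` is bounded,
`C¹`, with `‖∇u‖ ≤ 1/2` and `γ`-Hölder continuous derivative with constant `M`:
`|g̃(x,z)| ≤ (3/2)|z|` and `|g̃(x,z) - g̃(y,z)| ≤ C |x-y| |z|^γ` with `C = C(M)`. -/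
theorem stmt_11 (M : ℝ) (hM : 0 < M) :
    ∃ C > (0:ℝ), ∀ d : ℕ, 1 ≤ d → ∀ γ ∈ Set.Ioo (0:ℝ) 1,
      ∀ u : EuclideanSpace ℝ (Fin d) → EuclideanSpace ℝ (Fin d),
        (∃ K, ∀ x, ‖u x‖ ≤ K) → ContDiff ℝ 1 u →
        (∀ x, ‖fderiv ℝ u x‖ ≤ 1 / 2) →
        (∀ x y, ‖fderiv ℝ u x - fderiv ℝ u y‖ ≤ M * ‖x - y‖ ^ γ) →
        ∀ g : EuclideanSpace ℝ (Fin d) → EuclideanSpace ℝ (Fin d) →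
            EuclideanSpace ℝ (Fin d),
          (∀ x z, g x z =
            (Function.invFun (fun w => w + u w) x + z) +
              u (Function.invFun (fun w => w + u w) x + z) - x) →
          (∀ x z, ‖g x z‖ ≤ (3 / 2) * ‖z‖) ∧
          (∀ x y z, ‖g x z - g y z‖ ≤ C * ‖x - y‖ * ‖z‖ ^ γ) := by
  refine ⟨2 * M, by positivity, fun d _ γ _ u _ hu hgrad hHol g hg => ?_⟩
  have hdiff : Differentiable ℝ u := hu.differentiable one_ne_zero
  have hlip : LipschitzWith (1 / 2) u := lipschitzWith_of_nnnorm_fderiv_le hdiff fun x => by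
    rw [← NNReal.coe_le_coe]; simpa using hgrad x
  have hs := hlip.surjective_id_add (by norm_num)
  set ψ := Function.invFun fun w => w + u w
  have hΦψ : ∀ x, ψ x + u (ψ x) = x := Function.rightInverse_invFun hs
  have hgψ : ∀ x z, g x z = z + (u (ψ x + z) - u (ψ x)) := fun x z =>
    (hg x z).trans (id_add_invFun_add_sub hs x z)
  refine ⟨fun x z => ?_, fun x y z => ?_⟩
  · calc ‖g x z‖ ≤ ‖z‖ + ‖u (ψ x + z) - u (ψ x)‖ := hgψ x z ▸ norm_add_le _ _
      _ ≤ ‖z‖ + 1 / 2 * ‖z‖ := by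
          simpa using hlip.norm_sub_le (ψ x + z) (ψ x)
      _ = 3 / 2 * ‖z‖ := by ring
  · have hψ : ‖ψ x - ψ y‖ ≤ 2 * ‖x - y‖ := by
      have := hlip.one_sub_mul_norm_sub_le (ψ x) (ψ y)
      rw [hΦψ, hΦψ] at this
      norm_num at this
      linarith
    calc ‖g x z - g y z‖ = ‖(u (ψ x + z) - u (ψ x)) - (u (ψ y + z) - u (ψ y))‖ := by
          rw [hgψ, hgψ, add_sub_add_left_eq_sub]
      _ ≤ M * ‖z‖ ^ γ * ‖ψ x - ψ y‖ :=
          norm_sub_sub_translate_le hdiff z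
            (fun w => by simpa using hHol (w + z) w) _ _
      _ ≤ M * ‖z‖ ^ γ * (2 * ‖x - y‖) := by gcongr
      _ = 2 * M * ‖x - y‖ * ‖z‖ ^ γ := by ring
end
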